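/- arXiv:1406.5198 — 5 statements merged into one kernel-verified Lean document; each statement's English description precedes it below -/
import Mathlib

section
/- The set \nabla_\infty is dense in \overline\nabla_\infty with respect to the product topology; that is, the closure of \nabla_\infty in ℝ^ℕ contains \overline\nabla_\infty. -/
/-- The Kingman simplex: nonincreasing nonnegative sequences with sum at most 1. -/
def KingmanSimplex : Set (ℕ → ℝ) :=
  {x | (∀ i, x (i + 1) ≤ x i) ∧ (∀ i, 0 ≤ x i) ∧ Summable x ∧ ∑' i, x i ≤ 1}

/-- The subset of the Kingman simplex consisting of sequences summing to exactly 1. -/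
def nablaInfty : Set (ℕ → ℝ) :=
  {x ∈ KingmanSimplex | ∑' i, x i = 1}

/-!
A point `x` of the Kingman simplex misses total mass `d = 1 - ∑ xᵢ`. Spreading `d` evenly over
the first `n` coordinates keeps the sequence nonnegative and nonincreasing and brings its sum
to `1`, while each coordinate moves by at most `d / n`; letting `n → ∞` gives points of `∇_∞`
converging to `x` coordinatewise.
-/

open Filter Topology

noncomputable def spread (d : ℝ) (n : ℕ) : ℕ → ℝ :=
  fun i => if i < n then d / n else 0

lemma spread_nonneg {d : ℝ} (hd : 0 ≤ d) (n i : ℕ) : 0 ≤ spread d n i := by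
  unfold spread
  split_ifs <;> positivity

lemma antitone_spread {d : ℝ} (hd : 0 ≤ d) (n : ℕ) : Antitone (spread d n) := by
  intro i j hij
  unfold spread
  split_ifs with hj hi hi
  · rfl
  · omega
  · positivity
  · rfl

lemma hasSum_spread {n : ℕ} (hn : n ≠ 0) (d : ℝ) : HasSum (spread d n) d := by
  have hsupp : ∀ i ∉ Finset.range n, spread d n i = 0 := fun i hi => by
    simp_all [spread]
  convert (hasSum_sum_of_ne_finset_zero hsupp : HasSum (spread d n) _) using 1
  simp [spread, Finset.sum_ite_of_true, field]

lemma tendsto_spread_atTop (d : ℝ) : Tendsto (spread d) atTop (𝓝 0) := by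
  rw [tendsto_pi_nhds]
  intro i
  have hd : Tendsto (fun n : ℕ => d / n) atTop (𝓝 0) := tendsto_const_div_atTop_nhds_zero_nat d
  refine hd.congr' ?_
  filter_upwards [eventually_gt_atTop i] with n hn
  simp [spread, hn]

lemma add_spread_mem_nablaInfty {x : ℕ → ℝ} (hx : x ∈ KingmanSimplex) {n : ℕ} (hn : n ≠ 0) :
    x + spread (1 - ∑' i, x i) n ∈ nablaInfty := by
  obtain ⟨hmono, hnonneg, hsum, hle⟩ := hx
  have hd : 0 ≤ 1 - ∑' i, x i := sub_nonneg.mpr hle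
  have hsum_one : HasSum (x + spread (1 - ∑' i, x i) n) 1 := by
    have h := hsum.hasSum.add (hasSum_spread hn (1 - ∑' i, x i))
    rwa [add_sub_cancel] at h
  have hanti : Antitone (x + spread (1 - ∑' i, x i) n) :=
    (antitone_nat_of_succ_le hmono).add (antitone_spread hd n)
  have hpos : ∀ i, 0 ≤ (x + spread (1 - ∑' i, x i) n) i := fun i =>
    add_nonneg (hnonneg i) (spread_nonneg hd n i)
  exact ⟨⟨fun i => hanti (Nat.le_succ i), hpos, hsum_one.summable, hsum_one.tsum_eq.le⟩,
    hsum_one.tsum_eq⟩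

/-- `∇_∞` is dense in `\overline∇_∞` for the product topology: the closure of
`∇_∞` in `ℝ^ℕ` contains `\overline∇_∞`. -/
theorem kingmanSimplex_subset_closure_nablaInfty :
    KingmanSimplex ⊆ closure nablaInfty := by
  intro x hx
  have hlim : Tendsto (fun n => x + spread (1 - ∑' i, x i) n) atTop (𝓝 x) := by
    simpa using tendsto_const_nhds.add (tendsto_spread_atTop (1 - ∑' i, x i))
  refine mem_closure_of_tendsto hlim ?_
  filter_upwards [eventually_ne_atTop 0] with n hn
  exact add_spread_mem_nablaInfty hx hn
end

section
/- The interior of \nabla_\infty relative to the subspace topology on \overline\nabla_\infty is empty; consequently (since \nabla_\infty is dense in \overline\nabla_\infty), the boundary of \nabla_\infty relative to \overline\nabla_\infty is all of \overline\nabla_\infty. -/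
/-- `∇_∞` viewed as a subset of the Kingman simplex (with its subspace topology). -/
def nablaInftySub : Set KingmanSimplex :=
  {x | ∑' i, (x : ℕ → ℝ) i = 1}

/-!
For `x` in the Kingman simplex, the points `t • x` with `t < 1` have mass `< 1` and tend to `x`
as `t → 1`, so the complement of `∇_∞` is dense and `∇_∞` has empty interior. Conversely,
spreading the missing mass `1 - ∑ x` evenly over the first `n + 1` coordinates keeps the sequence
nonincreasing and changes each coordinate by at most `1 / (n + 1)`, so `∇_∞` is dense.
-/

open Filter Topology Set

lemma smul_mem_kingmanSimplex {x : ℕ → ℝ} (hx : x ∈ KingmanSimplex) {t : ℝ} (ht₀ : 0 ≤ t)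
    (ht₁ : t ≤ 1) : t • x ∈ KingmanSimplex := by
  obtain ⟨hanti, hnonneg, hsum, hle⟩ := hx
  refine ⟨fun i => mul_le_mul_of_nonneg_left (hanti i) ht₀, fun i => mul_nonneg ht₀ (hnonneg i),
    hsum.const_smul t, ?_⟩
  calc ∑' i, (t • x) i = t * ∑' i, x i := tsum_mul_left
    _ ≤ 1 * 1 := mul_le_mul ht₁ hle (tsum_nonneg hnonneg) zero_le_one
    _ = 1 := one_mul 1

lemma add_mem_kingmanSimplex {x y : ℕ → ℝ} (hx : x ∈ KingmanSimplex) (hy : y ∈ KingmanSimplex)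
    (hxy : ∑' i, x i + ∑' i, y i ≤ 1) : x + y ∈ KingmanSimplex := by
  obtain ⟨hxanti, hxnonneg, hxsum, -⟩ := hx
  obtain ⟨hyanti, hynonneg, hysum, -⟩ := hy
  refine ⟨fun i => add_le_add (hxanti i) (hyanti i), fun i => add_nonneg (hxnonneg i) (hynonneg i),
    hxsum.add hysum, ?_⟩
  rwa [Pi.add_def, hxsum.tsum_add hysum]

noncomputable def uniformPrefix (n : ℕ) : ℕ → ℝ :=
  fun i => if i ≤ n then ((n : ℝ) + 1)⁻¹ else 0

lemma tsum_uniformPrefix (n : ℕ) : ∑' i, uniformPrefix n i = 1 := by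
  unfold uniformPrefix
  rw [tsum_eq_sum (s := Finset.range (n + 1)) fun i hi => if_neg (by simpa using hi),
    Finset.sum_congr rfl fun i hi => if_pos (Nat.lt_succ_iff.mp (Finset.mem_range.mp hi)),
    Finset.sum_const, Finset.card_range, nsmul_eq_mul]
  push_cast
  exact mul_inv_cancel₀ (by positivity)

lemma uniformPrefix_mem_kingmanSimplex (n : ℕ) : uniformPrefix n ∈ KingmanSimplex := by
  refine ⟨fun i => ?_, fun i => ?_, ?_, (tsum_uniformPrefix n).le⟩
  · unfold uniformPrefix
    split_ifs <;> first | omega | positivity | exact le_rfl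
  · unfold uniformPrefix
    split_ifs <;> positivity
  · exact summable_of_ne_finset_zero (s := Finset.range (n + 1))
      fun i hi => if_neg (by simpa using hi)

lemma tendsto_uniformPrefix : Tendsto uniformPrefix atTop (𝓝 0) := by
  refine tendsto_pi_nhds.mpr fun i => ?_
  have h : Tendsto (fun n : ℕ => ((n : ℝ) + 1)⁻¹) atTop (𝓝 0) := by
    simpa [one_div] using tendsto_one_div_add_atTop_nhds_zero_nat (𝕜 := ℝ)
  refine h.congr' ?_
  filter_upwards [eventually_ge_atTop i] with n hn
  simp [uniformPrefix, hn]

lemma dense_compl_nablaInftySub : Dense nablaInftySubᶜ := by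
  intro x
  rw [closure_subtype]
  obtain ⟨-, -, -, hle⟩ := x.2
  have hcont : Continuous fun t : ℝ => t • (x : ℕ → ℝ) := by fun_prop
  have hlim : Tendsto (fun t : ℝ => t • (x : ℕ → ℝ)) (𝓝[<] 1) (𝓝 x) := by
    simpa using (hcont.tendsto 1).mono_left nhdsWithin_le_nhds
  refine mem_closure_of_tendsto hlim ?_
  filter_upwards [Ioo_mem_nhdsLT zero_lt_one] with t ⟨ht₀, ht₁⟩
  refine ⟨⟨_, smul_mem_kingmanSimplex x.2 ht₀.le ht₁.le⟩, fun h => ?_, rfl⟩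
  have hmass : t * ∑' i, (x : ℕ → ℝ) i = 1 := (tsum_mul_left).symm.trans h
  linarith [mul_le_mul_of_nonneg_left hle ht₀.le]

lemma dense_nablaInftySub : Dense nablaInftySub := by
  intro x
  rw [closure_subtype]
  obtain ⟨-, hnonneg, hsum, hle⟩ := x.2
  set s := ∑' i, (x : ℕ → ℝ) i
  have hs₀ : 0 ≤ s := tsum_nonneg hnonneg
  have hlim : Tendsto (fun n => (x : ℕ → ℝ) + (1 - s) • uniformPrefix n) atTop (𝓝 x) := by
    simpa using (tendsto_uniformPrefix.const_smul (1 - s)).const_add (x : ℕ → ℝ)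
  refine mem_closure_of_tendsto hlim (Eventually.of_forall fun n => ?_)
  have hmass : ∑' i, ((1 - s) • uniformPrefix n) i = 1 - s := by
    simp only [Pi.smul_apply, smul_eq_mul, tsum_mul_left, tsum_uniformPrefix, mul_one]
  have hy := smul_mem_kingmanSimplex (uniformPrefix_mem_kingmanSimplex n) (t := 1 - s)
    (by linarith) (by linarith)
  refine ⟨⟨_, add_mem_kingmanSimplex x.2 hy (by rw [hmass]; linarith)⟩, ?_, rfl⟩
  change ∑' i, ((x : ℕ → ℝ) i + ((1 - s) • uniformPrefix n) i) = 1
  rw [hsum.tsum_add hy.2.2.1, hmass]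
  ring

/-- The interior of `∇_∞` relative to the subspace topology on `\overline∇_∞` is empty;
consequently the boundary of `∇_∞` relative to `\overline∇_∞` is all of `\overline∇_∞`. -/
theorem interior_nablaInfty_eq_empty_and_frontier_eq_univ :
    interior nablaInftySub = ∅ ∧ frontier nablaInftySub = Set.univ := by
  have hinterior : interior nablaInftySub = ∅ :=
    interior_eq_empty_iff_dense_compl.mpr dense_compl_nablaInftySub
  refine ⟨hinterior, ?_⟩
  rw [frontier, hinterior, dense_nablaInftySub.closure_eq, sdiff_empty]
end

section
/- For every h ∈ ℋ, the function ψ_h : \overline\nabla_\infty → ℝ defined by ψ_h(x) := ∑_{i=1}^∞ h(x_i) is continuous on \overline\nabla_\infty with respect to the product topology. -/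
/-!
Since `h 0 = h' 0 = 0`, for every `ε > 0` we have `|h t| ≤ ε t` for small `t ≥ 0`. A point `x` of
the Kingman simplex is nonincreasing with sum at most `1`, so `x n ≤ 1 / (n + 1)`; hence beyond
an index `N` depending only on `ε` every coordinate is small and the tail `∑_{n ≥ N} |h (x n)|`
is at most `ε ∑ x n ≤ ε`. The partial sums, continuous in the product topology, therefore
converge uniformly on the simplex.
-/

open Set

open Filter Topology Asymptotics

theorem Antitone.succ_mul_le_tsum {x : ℕ → ℝ} (hx : Antitone x) (hx0 : ∀ i, 0 ≤ x i)
    (hs : Summable x) (n : ℕ) : ((n : ℝ) + 1) * x n ≤ ∑' i, x i :=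
  calc ((n : ℝ) + 1) * x n = ∑ _i ∈ Finset.range (n + 1), x n := by simp
    _ ≤ ∑ i ∈ Finset.range (n + 1), x i :=
      Finset.sum_le_sum fun _i hi => hx (Finset.mem_range_succ_iff.mp hi)
    _ ≤ ∑' i, x i := hs.sum_le_tsum _ fun i _ => hx0 i

theorem antitone_of_mem_kingmanSimplex {x : ℕ → ℝ} (hx : x ∈ KingmanSimplex) : Antitone x :=
  antitone_nat_of_succ_le hx.1

theorem le_inv_succ_of_mem_kingmanSimplex {x : ℕ → ℝ} (hx : x ∈ KingmanSimplex) (n : ℕ) :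
    x n ≤ ((n : ℝ) + 1)⁻¹ := by
  rw [← one_div, le_div_iff₀' (by positivity)]
  exact ((antitone_of_mem_kingmanSimplex hx).succ_mul_le_tsum hx.2.1 hx.2.2.1 n).trans hx.2.2.2

theorem mem_Icc_of_mem_kingmanSimplex {x : ℕ → ℝ} (hx : x ∈ KingmanSimplex) (n : ℕ) :
    x n ∈ Icc (0 : ℝ) 1 :=
  ⟨hx.2.1 n, (le_inv_succ_of_mem_kingmanSimplex hx n).trans (inv_le_one_of_one_le₀ (by simp))⟩

theorem norm_tsum_comp_le_of_norm_le {f : ℝ → ℝ} {s : Set ℝ} {ε : ℝ}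
    (hf : ∀ t ∈ s, ‖f t‖ ≤ ε * t) {x : ℕ → ℝ} (hxs : ∀ n, x n ∈ s) (hx : Summable x) :
    Summable (fun n => f (x n)) ∧ ‖∑' n, f (x n)‖ ≤ ε * ∑' n, x n :=
  ⟨(hx.mul_left ε).of_norm_bounded fun n => hf _ (hxs n),
    tsum_of_norm_bounded (hx.hasSum.mul_left ε) fun n => hf _ (hxs n)⟩

theorem tendstoUniformlyOn_sum_range_kingmanSimplex {f : ℝ → ℝ} (hf : f =o[𝓝[≥] 0] id) :
    TendstoUniformlyOn (fun N x => ∑ n ∈ Finset.range N, f (x n)) (fun x => ∑' n, f (x n))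
      atTop KingmanSimplex := by
  rw [Metric.tendstoUniformlyOn_iff]
  intro ε hε
  obtain ⟨δ, hδ, hfδ⟩ := (nhdsGE_basis (0 : ℝ)).eventually_iff.mp (hf.def (half_pos hε))
  replace hfδ : ∀ t ∈ Ico 0 δ, ‖f t‖ ≤ ε / 2 * t := fun t ht => by
    simpa [abs_of_nonneg ht.1] using hfδ ht
  obtain ⟨N, hN⟩ := exists_nat_one_div_lt hδ
  filter_upwards [eventually_ge_atTop N] with M hM x hx
  have htail_mem : ∀ n, x (n + M) ∈ Ico 0 δ := fun n =>
    ⟨hx.2.1 _, calc x (n + M) ≤ x N := antitone_of_mem_kingmanSimplex hx (by omega)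
      _ ≤ ((N : ℝ) + 1)⁻¹ := le_inv_succ_of_mem_kingmanSimplex hx N
      _ < δ := by simpa using hN⟩
  have htail_le : ∑' n, x (n + M) ≤ 1 :=
    (tsum_comp_le_tsum_of_inj hx.2.2.1 hx.2.1 (add_left_injective M)).trans hx.2.2.2
  obtain ⟨hsum, hnorm⟩ :=
    norm_tsum_comp_le_of_norm_le hfδ htail_mem ((summable_nat_add_iff M).mpr hx.2.2.1)
  rw [dist_eq_norm, ← ((summable_nat_add_iff M).mp hsum).sum_add_tsum_nat_add M,
    add_sub_cancel_left]
  calc _ ≤ ε / 2 * ∑' n, x (n + M) := hnorm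
    _ ≤ ε / 2 * 1 := by gcongr
    _ < ε := by linarith

theorem continuousOn_tsum_comp_kingmanSimplex {f : ℝ → ℝ} (hc : ContinuousOn f (Icc 0 1))
    (hf : f =o[𝓝[≥] 0] id) : ContinuousOn (fun x => ∑' n, f (x n)) KingmanSimplex :=
  (tendstoUniformlyOn_sum_range_kingmanSimplex hf).continuousOn <| .of_forall fun _N =>
    continuousOn_finsetSum _ fun n _ =>
      hc.comp (continuous_apply n).continuousOn fun _x hx => mem_Icc_of_mem_kingmanSimplex hx n

theorem HasDerivWithinAt.isLittleO_id {f : ℝ → ℝ} {s : Set ℝ} (hf : HasDerivWithinAt f 0 s 0)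
    (hf0 : f 0 = 0) : f =o[𝓝[s] 0] id := by
  have h := hasDerivWithinAt_iff_isLittleO.mp hf
  simp only [hf0, sub_zero, smul_zero] at h
  exact h

theorem psi_h_continuousOn_general
    (h h' : ℝ → ℝ)
    (hd1 : ∀ u ∈ Icc (0 : ℝ) 1, HasDerivWithinAt h (h' u) (Icc (0 : ℝ) 1) u)
    (h0 : h 0 = 0) (h'0 : h' 0 = 0) :
    ContinuousOn (fun x : ℕ → ℝ => ∑' i, h (x i)) KingmanSimplex := by
  have hlittle : h =o[𝓝[≥] 0] id := by
    rw [← nhdsWithin_Icc_eq_nhdsGE (zero_lt_one' ℝ)]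
    exact (h'0 ▸ hd1 0 (left_mem_Icc.mpr zero_le_one)).isLittleO_id h0
  exact continuousOn_tsum_comp_kingmanSimplex (fun u hu => (hd1 u hu).continuousWithinAt) hlittle

/-- For every `h ∈ ℋ` (twice continuously differentiable on `[0,1]` with
`h(0) = h'(0) = 0`), the function `ψ_h(x) := ∑ h(x_i)` is continuous on the Kingman
simplex with respect to the product topology. -/
theorem psi_h_continuousOn
    (h h' h'' : ℝ → ℝ)
    (hd1 : ∀ u ∈ Icc (0 : ℝ) 1, HasDerivWithinAt h (h' u) (Icc (0 : ℝ) 1) u)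
    (hd2 : ∀ u ∈ Icc (0 : ℝ) 1, HasDerivWithinAt h' (h'' u) (Icc (0 : ℝ) 1) u)
    (hcont : ContinuousOn h'' (Icc (0 : ℝ) 1))
    (h0 : h 0 = 0) (h'0 : h' 0 = 0) :
    ContinuousOn (fun x : ℕ → ℝ => ∑' i, h (x i)) KingmanSimplex :=
  psi_h_continuousOn_general h h' hd1 h0 h'0
end

section
/- Let 0 ≤ α < 1, θ > −α, and let m ≥ 2 be a real number. For every x ∈ \nabla_\infty (i.e., x ∈ \overline\nabla_\infty with ∑_{i=1}^∞ x_i = 1), both series below converge and (1/2)·∑_{i=1}^∞ x_i(1 − x_i)·m(m−1)·x_i^{m−2} − (1/2)·∑_{i=1}^∞ (θ x_i + α)·m·x_i^{m−1} = (1/2)·m·[(m−1−α)·φ_{m−1}(x) − (m−1+θ)·φ_m(x)]. -/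
/-- The generator of Petrov's diffusion applied to `φ_m` on `∇_∞`:
`A φ_m = (1/2) m [(m-1-α) φ_{m-1} - (m-1+θ) φ_m]` (real `m ≥ 2`, real powers). -/
theorem generator_on_phi_m (α θ m : ℝ) (hα0 : 0 ≤ α) (hα1 : α < 1) (hθ : -α < θ)
    (hm : 2 ≤ m) (x : ℕ → ℝ) (hx : x ∈ nablaInfty) :
    Summable (fun i => x i * (1 - x i) * (m * (m - 1)) * x i ^ (m - 2)) ∧
    Summable (fun i => (θ * x i + α) * (m * x i ^ (m - 1))) ∧
    (1 / 2) * (∑' i, x i * (1 - x i) * (m * (m - 1)) * x i ^ (m - 2)) -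
      (1 / 2) * (∑' i, (θ * x i + α) * (m * x i ^ (m - 1))) =
    (1 / 2) * m * ((m - 1 - α) * (∑' i, x i ^ (m - 1)) - (m - 1 + θ) * (∑' i, x i ^ m)) := by
  obtain ⟨⟨hmono, hnn, hsum, hle⟩, heq⟩ := hx
  have hx1 : ∀ i, x i ≤ 1 := by
    intro i
    have := Summable.le_tsum hsum i (fun j _ => hnn j)
    linarith [heq ▸ this]
  -- pointwise identities
  have h1 : ∀ i, x i ^ (m - 1) = x i * x i ^ (m - 2) := by
    intro i
    have : m - 1 = 1 + (m - 2) := by ring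
    rw [this, Real.rpow_add' (hnn i) (by rw [← this]; intro h; linarith), Real.rpow_one]
  have h2 : ∀ i, x i ^ m = x i * x i ^ (m - 1) := by
    intro i
    have : m = 1 + (m - 1) := by ring
    nth_rewrite 1 [this]
    rw [ Real.rpow_add' (hnn i) (by rw [← this]; intro h; linarith), Real.rpow_one]
  have hple : ∀ i, x i ^ (m - 1) ≤ x i := by
    intro i
    rcases eq_or_lt_of_le (hnn i) with h | h
    · rw [← h, Real.zero_rpow (by intro h'; linarith)]
    · calc x i ^ (m - 1) ≤ x i ^ (1 : ℝ) :=
            Real.rpow_le_rpow_of_exponent_ge h (hx1 i) (by linarith)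
        _ = x i := Real.rpow_one _
  have hqle : ∀ i, x i ^ m ≤ x i := by
    intro i
    rcases eq_or_lt_of_le (hnn i) with h | h
    · rw [← h, Real.zero_rpow (by intro h'; linarith)]
    · calc x i ^ m ≤ x i ^ (1 : ℝ) :=
            Real.rpow_le_rpow_of_exponent_ge h (hx1 i) (by linarith)
        _ = x i := Real.rpow_one _
  have hp : Summable (fun i => x i ^ (m - 1)) :=
    Summable.of_nonneg_of_le (fun i => Real.rpow_nonneg (hnn i) _) hple hsum
  have hq : Summable (fun i => x i ^ m) :=
    Summable.of_nonneg_of_le (fun i => Real.rpow_nonneg (hnn i) _) hqle hsum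
  have e1 : (fun i => x i * (1 - x i) * (m * (m - 1)) * x i ^ (m - 2)) =
      fun i => m * (m - 1) * (x i ^ (m - 1) - x i ^ m) := by
    funext i
    rw [h2 i, h1 i]; ring
  have e2 : (fun i => (θ * x i + α) * (m * x i ^ (m - 1))) =
      fun i => θ * m * x i ^ m + α * m * x i ^ (m - 1) := by
    funext i
    rw [h2 i]; ring
  have s1 : Summable (fun i => x i * (1 - x i) * (m * (m - 1)) * x i ^ (m - 2)) := by
    rw [e1]; exact (hp.sub hq).mul_left _
  have s2 : Summable (fun i => (θ * x i + α) * (m * x i ^ (m - 1))) := by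
    rw [e2]; exact (hq.mul_left _).add (hp.mul_left _)
  refine ⟨s1, s2, ?_⟩
  rw [e1, e2, tsum_mul_left, Summable.tsum_sub hp hq,
    Summable.tsum_add (hq.mul_left _) (hp.mul_left _), tsum_mul_left, tsum_mul_left]
  ring
end

section
/- If x, y ∈ \overline\nabla_\infty satisfy ∑_{i=1}^∞ x_i^m = ∑_{i=1}^∞ y_i^m for every integer m ≥ 2, then x = y. -/
open Filter Finset

lemma eventually_pow_lt_pow_succ {a b : ℝ} (hb : 0 ≤ b) (hba : b < a) :
    ∀ᶠ n : ℕ in atTop, b ^ n < a ^ (n + 1) := by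
  have ha : 0 < a := hb.trans_lt hba
  have hratio : Tendsto (fun n : ℕ => (b / a) ^ n) atTop (nhds 0) :=
    tendsto_pow_atTop_nhds_zero_of_lt_one (div_nonneg hb ha.le) ((div_lt_one ha).2 hba)
  filter_upwards [hratio.eventually_lt_const ha] with n hn
  calc b ^ n = (b / a) ^ n * a ^ n := by rw [div_pow, div_mul_cancel₀ _ (pow_pos ha n).ne']
    _ < a * a ^ n := by gcongr
    _ = a ^ (n + 1) := (pow_succ' a n).symm

namespace KingmanSimplex

variable {x y : ℕ → ℝ}

lemma nonneg (hx : x ∈ KingmanSimplex) (i : ℕ) : 0 ≤ x i := hx.2.1 i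

lemma summable (hx : x ∈ KingmanSimplex) : Summable x := hx.2.2.1

lemma antitone (hx : x ∈ KingmanSimplex) : Antitone x := antitone_nat_of_succ_le hx.1

lemma le_one (hx : x ∈ KingmanSimplex) (i : ℕ) : x i ≤ 1 :=
  ((summable hx).le_tsum i fun j _ => nonneg hx j).trans hx.2.2.2

lemma tsum_nat_add_le_one (hx : x ∈ KingmanSimplex) (k : ℕ) : ∑' i, x (i + k) ≤ 1 := by
  have hhead : 0 ≤ ∑ i ∈ range k, x i := sum_nonneg fun i _ => nonneg hx i
  linarith [(summable hx).sum_add_tsum_nat_add k, hx.2.2.2]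

lemma summable_pow (hx : x ∈ KingmanSimplex) {m : ℕ} (hm : m ≠ 0) :
    Summable fun i => x i ^ m :=
  (summable hx).of_nonneg_of_le (fun i => pow_nonneg (nonneg hx i) m) fun i =>
    pow_le_of_le_one (nonneg hx i) (le_one hx i) hm

lemma tsum_nat_add_pow_succ_le (hx : x ∈ KingmanSimplex) (k n : ℕ) :
    ∑' i, x (i + k) ^ (n + 1) ≤ x k ^ n := by
  have htail : Summable fun i => x (i + k) := (summable_nat_add_iff k).2 (summable hx)
  have hterm (i : ℕ) : x (i + k) ^ (n + 1) ≤ x k ^ n * x (i + k) := by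
    rw [pow_succ]
    exact mul_le_mul_of_nonneg_right
      (pow_le_pow_left₀ (nonneg hx _) (antitone hx (Nat.le_add_left k i)) n) (nonneg hx _)
  calc ∑' i, x (i + k) ^ (n + 1)
      ≤ ∑' i, x k ^ n * x (i + k) :=
        ((summable_nat_add_iff k).2 (summable_pow hx n.succ_ne_zero)).tsum_le_tsum hterm
          (htail.mul_left _)
    _ = x k ^ n * ∑' i, x (i + k) := tsum_mul_left
    _ ≤ x k ^ n := mul_le_of_le_one_right (pow_nonneg (nonneg hx k) n) (tsum_nat_add_le_one hx k)

lemma tsum_pow_succ_le (hx : x ∈ KingmanSimplex) (k n : ℕ) :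
    ∑' i, x i ^ (n + 1) ≤ ∑ i ∈ range k, x i ^ (n + 1) + x k ^ n := by
  rw [← (summable_pow hx n.succ_ne_zero).sum_add_tsum_nat_add k]
  exact add_le_add_right (tsum_nat_add_pow_succ_le hx k n) _

lemma exists_tsum_pow_lt_of_lt (hx : x ∈ KingmanSimplex) (hy : y ∈ KingmanSimplex) {k : ℕ}
    (hhead : ∀ i < k, x i = y i) (hlt : y k < x k) :
    ∃ m, 2 ≤ m ∧ ∑' i, y i ^ m < ∑' i, x i ^ m := by
  obtain ⟨n, hpow, hn⟩ :=
    ((eventually_pow_lt_pow_succ (nonneg hy k) hlt).and (eventually_ge_atTop 1)).exists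
  refine ⟨n + 1, by omega, ?_⟩
  have hsame : ∑ i ∈ range k, y i ^ (n + 1) = ∑ i ∈ range k, x i ^ (n + 1) :=
    sum_congr rfl fun i hi => by rw [hhead i (mem_range.1 hi)]
  calc ∑' i, y i ^ (n + 1)
      ≤ ∑ i ∈ range k, y i ^ (n + 1) + y k ^ n := tsum_pow_succ_le hy k n
    _ < ∑ i ∈ range k, x i ^ (n + 1) + x k ^ (n + 1) := by rw [hsame]; gcongr
    _ = ∑ i ∈ range (k + 1), x i ^ (n + 1) := (sum_range_succ _ _).symm
    _ ≤ ∑' i, x i ^ (n + 1) :=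
        (summable_pow hx n.succ_ne_zero).sum_le_tsum _ fun i _ => pow_nonneg (nonneg hx i) _

end KingmanSimplex

/-- The power sums `φ_m`, `m = 2, 3, …`, separate points of the Kingman simplex. -/
theorem power_sums_separate_points (x y : ℕ → ℝ)
    (hx : x ∈ KingmanSimplex) (hy : y ∈ KingmanSimplex)
    (h : ∀ m : ℕ, 2 ≤ m → ∑' i, x i ^ m = ∑' i, y i ^ m) :
    x = y := by
  by_contra hne
  classical
  have hdiff : ∃ k, x k ≠ y k := Function.ne_iff.1 hne
  set k := Nat.find hdiff
  have hhead (i : ℕ) (hi : i < k) : x i = y i := not_not.1 (Nat.find_min hdiff hi)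
  rcases (Nat.find_spec hdiff).lt_or_gt with hlt | hgt
  · obtain ⟨m, hm, hsum⟩ :=
      KingmanSimplex.exists_tsum_pow_lt_of_lt hy hx (fun i hi => (hhead i hi).symm) hlt
    exact hsum.ne (h m hm)
  · obtain ⟨m, hm, hsum⟩ := KingmanSimplex.exists_tsum_pow_lt_of_lt hx hy hhead hgt
    exact hsum.ne' (h m hm)
end
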